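/- Let f be a pseudo-involutory power series (f(0)=0, f'(0)=1, f(-f(z))=-z) and g a power series with g(0)=1. Then g(-f(z))·g(z) = 1 if and only if g = exp(φ(√(zf))) for some odd power series φ ∈ ℝ[[z]] (φ(-z) = -φ(z), φ(0)=0). -/

import Mathlib

open PowerSeries

/-- Composition `f ∘ g` of formal power series over `ℝ`, i.e. `f(g(z))`
(the usual composition when `g` has zero constant term). -/
noncomputable def pscomp (f g : PowerSeries ℝ) : PowerSeries ℝ :=
  PowerSeries.mk fun n => ∑ k ∈ Finset.range (n + 1), coeff k f * coeff n (g ^ k)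

namespace PScompAux
open Finset

lemma coeff_pscomp (f g : PowerSeries ℝ) (n : ℕ) :
    coeff n (pscomp f g) = ∑ k ∈ Finset.range (n + 1), coeff k f * coeff n (g ^ k) := by
  simp [pscomp]

lemma constantCoeff_pscomp (f g : PowerSeries ℝ) :
    constantCoeff (pscomp f g) = constantCoeff f := by
  have := coeff_pscomp f g 0
  simp only [Finset.range_one, Finset.sum_singleton, pow_zero, coeff_zero_eq_constantCoeff,
    map_one, mul_one] at this
  simpa [coeff_zero_eq_constantCoeff] using this

lemma coeff_pow_eq_zero {g : PowerSeries ℝ} (hg : constantCoeff g = 0)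
    {n k : ℕ} (h : n < k) : coeff n (g ^ k) = 0 := by
  have hX : (X : PowerSeries ℝ) ^ k ∣ g ^ k := pow_dvd_pow_of_dvd (X_dvd_iff.mpr hg) k
  exact X_pow_dvd_iff.mp hX n h

lemma coeff_aeval {g : PowerSeries ℝ} (hg : constantCoeff g = 0) (P : Polynomial ℝ) (n : ℕ) :
    coeff n (Polynomial.aeval g P) = ∑ k ∈ Finset.range (n + 1), P.coeff k * coeff n (g ^ k) := by
  set N := max (P.natDegree + 1) (n + 1) with hN
  have hd : P.natDegree < N := lt_of_lt_of_le (Nat.lt_succ_self _) (le_max_left _ _)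
  rw [Polynomial.aeval_eq_sum_range' hd, map_sum]
  simp only [coeff_smul, smul_eq_mul]
  exact (Finset.sum_subset (Finset.range_subset_range.mpr (le_max_right _ _)) (fun i _ hi => by
      have : n < i := by simp only [Finset.mem_range, not_lt] at hi; omega
      rw [coeff_pow_eq_zero hg this, mul_zero])).symm

lemma coeff_pscomp_aeval {g : PowerSeries ℝ} (hg : constantCoeff g = 0) (f : PowerSeries ℝ)
    {n m : ℕ} (h : n < m) :
    coeff n (pscomp f g) = coeff n (Polynomial.aeval g (trunc m f)) := by
  rw [coeff_aeval hg, coeff_pscomp]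
  refine Finset.sum_congr rfl fun k hk => ?_
  rw [coeff_trunc]
  simp only [Finset.mem_range] at hk
  rw [if_pos (by omega)]

lemma pscomp_add (f₁ f₂ g : PowerSeries ℝ) :
    pscomp (f₁ + f₂) g = pscomp f₁ g + pscomp f₂ g := by
  ext n
  simp [coeff_pscomp, add_mul, Finset.sum_add_distrib]

lemma pscomp_neg (f g : PowerSeries ℝ) : pscomp (-f) g = -pscomp f g := by
  ext n
  simp [coeff_pscomp, Finset.sum_neg_distrib]

lemma pscomp_one (g : PowerSeries ℝ) : pscomp 1 g = 1 := by
  ext n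
  rw [coeff_pscomp, Finset.sum_eq_single 0]
  · simp [coeff_one]
  · intro k _ hk0
    rw [coeff_one, if_neg hk0, zero_mul]
  · simp

lemma pscomp_X {g : PowerSeries ℝ} (hg : constantCoeff g = 0) : pscomp X g = g := by
  ext n
  rw [coeff_pscomp, Finset.sum_eq_single 1]
  · simp
  · intro k _ hk1
    rw [coeff_X, if_neg hk1, zero_mul]
  · intro h
    simp only [Finset.mem_range, not_lt] at h
    have hn0 : n = 0 := by omega
    subst hn0; simp [hg]

lemma pscomp_X_right (f : PowerSeries ℝ) : pscomp f X = f := by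
  ext n
  rw [coeff_pscomp, Finset.sum_eq_single n]
  · simp [coeff_X_pow]
  · intro k hk hkn
    rw [coeff_X_pow, if_neg (fun h => hkn h.symm), mul_zero]
  · simp

lemma pscomp_mul {g : PowerSeries ℝ} (hg : constantCoeff g = 0) (f₁ f₂ : PowerSeries ℝ) :
    pscomp (f₁ * f₂) g = pscomp f₁ g * pscomp f₂ g := by
  ext n
  rw [coeff_pscomp_aeval hg _ (Nat.lt_succ_self n), PowerSeries.coeff_mul]
  have hAB : ∀ p, p < n + 1 → ∀ (f : PowerSeries ℝ),
      coeff p (pscomp f g) = coeff p (Polynomial.aeval g (trunc (n+1) f)) :=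
    fun p hp f => coeff_pscomp_aeval hg f hp
  rw [show ∑ p ∈ Finset.HasAntidiagonal.antidiagonal n, coeff p.1 (pscomp f₁ g) * coeff p.2 (pscomp f₂ g)
      = ∑ p ∈ Finset.HasAntidiagonal.antidiagonal n, coeff p.1 (Polynomial.aeval g (trunc (n+1) f₁)) *
          coeff p.2 (Polynomial.aeval g (trunc (n+1) f₂)) from
    Finset.sum_congr rfl fun p hp => by
      have := Finset.HasAntidiagonal.mem_antidiagonal.mp hp
      rw [hAB p.1 (by omega) f₁, hAB p.2 (by omega) f₂]]
  rw [← PowerSeries.coeff_mul, ← map_mul]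
  rw [coeff_aeval hg, coeff_aeval hg]
  refine Finset.sum_congr rfl fun k hk => ?_
  simp only [Finset.mem_range] at hk
  congr 1
  rw [Polynomial.coeff_mul, coeff_trunc, if_pos (by omega), PowerSeries.coeff_mul]
  refine Finset.sum_congr rfl fun p hp => ?_
  have := Finset.HasAntidiagonal.mem_antidiagonal.mp hp
  rw [coeff_trunc, coeff_trunc, if_pos (by omega), if_pos (by omega)]

lemma pscomp_pow {g : PowerSeries ℝ} (hg : constantCoeff g = 0) (f : PowerSeries ℝ) (k : ℕ) :
    pscomp (f ^ k) g = (pscomp f g) ^ k := by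
  induction k with
  | zero => simpa using pscomp_one g
  | succ k ih => rw [pow_succ, pow_succ, pscomp_mul hg, ih]

lemma pscomp_assoc (a : PowerSeries ℝ) {b c : PowerSeries ℝ}
    (hb : constantCoeff b = 0) (hc : constantCoeff c = 0) :
    pscomp (pscomp a b) c = pscomp a (pscomp b c) := by
  ext n
  rw [coeff_pscomp, coeff_pscomp]
  have h1 : ∀ k, coeff n ((pscomp b c) ^ k) = coeff n (pscomp (b ^ k) c) := fun k => by
    rw [pscomp_pow hc]
  simp only [h1, coeff_pscomp]
  have step1 : ∀ j ∈ Finset.range (n+1),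
      (∑ k ∈ Finset.range (j + 1), coeff k a * coeff j (b ^ k)) * coeff n (c ^ j)
      = ∑ k ∈ Finset.range (n + 1), coeff k a * coeff j (b ^ k) * coeff n (c ^ j) := by
    intro j hj
    simp only [Finset.mem_range] at hj
    rw [Finset.sum_mul]
    refine Finset.sum_subset (Finset.range_subset_range.mpr (by omega)) fun k hk hk' => ?_
    simp only [Finset.mem_range, not_lt] at hk hk'
    rw [coeff_pow_eq_zero hb (by omega), mul_zero, zero_mul]
  rw [Finset.sum_congr rfl step1, Finset.sum_comm]
  refine Finset.sum_congr rfl fun k _ => ?_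
  rw [Finset.mul_sum]
  exact Finset.sum_congr rfl fun j _ => by ring

lemma Xpow_dvd_pow_sub_pow {A B : PowerSeries ℝ} (hA : constantCoeff A = 0)
    (hB : constantCoeff B = 0) {n : ℕ} (hAB : (X : PowerSeries ℝ) ^ n ∣ A - B) (k : ℕ) :
    (X : PowerSeries ℝ) ^ (n + k) ∣ A ^ (k + 1) - B ^ (k + 1) := by
  induction k with
  | zero => simpa using hAB
  | succ k ih =>
    have key : A ^ (k + 2) - B ^ (k + 2) = A * (A ^ (k+1) - B ^ (k+1)) + (A - B) * B ^ (k+1) := by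
      ring
    rw [key]
    refine dvd_add ?_ ?_
    · have : (X : PowerSeries ℝ) ^ (1 + (n + k)) ∣ A * (A ^ (k+1) - B ^ (k+1)) := by
        rw [pow_add]
        exact mul_dvd_mul (by simpa using X_dvd_iff.mpr hA) ih
      simpa [show 1 + (n + k) = n + (k+1) by omega] using this
    · have : (X : PowerSeries ℝ) ^ (n + (k + 1)) ∣ (A - B) * B ^ (k+1) := by
        rw [pow_add]
        exact mul_dvd_mul hAB (pow_dvd_pow_of_dvd (X_dvd_iff.mpr hB) _)
      exact this

lemma key_lemma {E A B : PowerSeries ℝ} (hE1 : coeff 1 E = 1)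
    (hA : constantCoeff A = 0) (hB : constantCoeff B = 0) (n : ℕ)
    (h : ∀ j < n, coeff j A = coeff j B) :
    coeff n (pscomp E A) = coeff n (pscomp E B) + (coeff n A - coeff n B) := by
  have hdvd : (X : PowerSeries ℝ) ^ n ∣ A - B := by
    rw [X_pow_dvd_iff]
    intro m hm
    rw [map_sub, h m hm, sub_self]
  have hpow : ∀ k, 2 ≤ k → coeff n (A ^ k) = coeff n (B ^ k) := by
    intro k hk
    obtain ⟨j, rfl⟩ : ∃ j, k = j + 2 := ⟨k - 2, by omega⟩
    have := Xpow_dvd_pow_sub_pow hA hB hdvd (j + 1)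
    have h0 : coeff n (A ^ (j+2) - B ^ (j+2)) = 0 :=
      X_pow_dvd_iff.mp this n (by omega)
    rw [map_sub, sub_eq_zero] at h0
    exact h0
  rw [coeff_pscomp, coeff_pscomp]
  rcases Nat.eq_zero_or_pos n with rfl | hn
  · simp [hA, hB]
  · have expand : ∀ C : PowerSeries ℝ, ∑ k ∈ Finset.range (n + 1), coeff k E * coeff n (C ^ k)
        = coeff 0 E * coeff n (1 : PowerSeries ℝ) + coeff n C
          + ∑ k ∈ Finset.Ico 2 (n+1), coeff k E * coeff n (C ^ k) := by
      intro C
      rw [Finset.range_eq_Ico]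
      rw [← Finset.sum_Ico_consecutive _ (by omega : 0 ≤ 2) (by omega : 2 ≤ n+1)]
      congr 1
      rw [Finset.sum_Ico_eq_sum_range]
      simp [Finset.sum_range_succ, hE1]
    rw [expand A, expand B]
    have : ∑ k ∈ Finset.Ico 2 (n+1), coeff k E * coeff n (A ^ k)
        = ∑ k ∈ Finset.Ico 2 (n+1), coeff k E * coeff n (B ^ k) := by
      refine Finset.sum_congr rfl fun k hk => ?_
      simp only [Finset.mem_Ico] at hk
      rw [hpow k hk.1]
    rw [this]
    ring

lemma pscomp_injective {E A B : PowerSeries ℝ} (hE1 : coeff 1 E = 1)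
    (hA : constantCoeff A = 0) (hB : constantCoeff B = 0)
    (h : pscomp E A = pscomp E B) : A = B := by
  ext n
  induction n using Nat.strong_induction_on with
  | _ n ih =>
    have := key_lemma hE1 hA hB n ih
    rw [h] at this
    linarith [this]

noncomputable def invC (E t : PowerSeries ℝ) : ℕ → ℝ
  | n => coeff n t - coeff n (pscomp E (PowerSeries.mk fun j =>
      if h : j < n then invC E t j else 0))
  termination_by n => n

lemma pscomp_surjective {E t : PowerSeries ℝ} (hE1 : coeff 1 E = 1)
    (ht : constantCoeff t = constantCoeff E) :
    ∃ A : PowerSeries ℝ, constantCoeff A = 0 ∧ pscomp E A = t := by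
  set A : PowerSeries ℝ := PowerSeries.mk (invC E t) with hAdef
  have hcoeffA : ∀ n, coeff n A = invC E t n := fun n => coeff_mk n _
  have hA0 : constantCoeff A = 0 := by
    rw [← coeff_zero_eq_constantCoeff_apply, hcoeffA, invC]
    have : (PowerSeries.mk fun j => if h : j < 0 then invC E t j else 0) = 0 := by
      ext m; simp
    rw [this]
    have h0 : coeff 0 (pscomp E (0 : PowerSeries ℝ)) = constantCoeff E := by
      rw [coeff_zero_eq_constantCoeff_apply, constantCoeff_pscomp]
    rw [h0]
    rw [coeff_zero_eq_constantCoeff_apply, ht, sub_self]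
  refine ⟨A, hA0, ?_⟩
  ext n
  set B : PowerSeries ℝ := PowerSeries.mk fun j => if h : j < n then invC E t j else 0 with hBdef
  have hB0 : constantCoeff B = 0 := by
    rw [← coeff_zero_eq_constantCoeff_apply, hBdef, coeff_mk]
    split
    · rw [show invC E t 0 = coeff 0 A from (hcoeffA 0).symm,
        coeff_zero_eq_constantCoeff_apply, hA0]
    · rfl
  have hagree : ∀ j < n, coeff j A = coeff j B := by
    intro j hj
    rw [hcoeffA, hBdef, coeff_mk, dif_pos hj]
  have hk := key_lemma hE1 hA0 hB0 n hagree
  have hBn : coeff n B = 0 := by rw [hBdef, coeff_mk]; simp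
  have hAn : coeff n A = coeff n t - coeff n (pscomp E B) := by
    rw [hcoeffA]
    conv_lhs => rw [invC]
  rw [hk, hAn, hBn]
  ring

lemma pscomp_negX (f : PowerSeries ℝ) : pscomp f (-X) = rescale (-1) f := by
  ext n
  rw [coeff_pscomp, coeff_rescale]
  have hneg : ∀ k : ℕ, ((-X : PowerSeries ℝ)) ^ k = ((-1 : ℝ) ^ k) • (X : PowerSeries ℝ) ^ k := by
    intro k
    rw [show (-X : PowerSeries ℝ) = (-1 : ℝ) • X by simp, smul_pow]
  rw [Finset.sum_eq_single n]
  · rw [hneg, coeff_smul, coeff_X_pow, if_pos rfl]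
    simp [mul_comm]
  · intro k _ hkn
    rw [hneg, coeff_smul, coeff_X_pow, if_neg (fun h => hkn h.symm)]
    simp
  · simp

lemma exp_coeff_one : coeff 1 (PowerSeries.exp ℝ) = 1 := by
  simp [PowerSeries.coeff_exp]

lemma exp_const : constantCoeff (PowerSeries.exp ℝ) = 1 := by
  simp [PowerSeries.constantCoeff_exp]

lemma ExpMul {u : PowerSeries ℝ} (hu : constantCoeff u = 0) :
    pscomp (PowerSeries.exp ℝ) u * pscomp (PowerSeries.exp ℝ) (-u) = 1 := by
  have hnegX0 : constantCoeff (-X : PowerSeries ℝ) = 0 := by simp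
  have h1 : -u = pscomp (-X) u := by rw [pscomp_neg, pscomp_X hu]
  rw [h1, ← pscomp_assoc (PowerSeries.exp ℝ) hnegX0 hu, pscomp_negX, ← pscomp_mul hu]
  have h2 : PowerSeries.exp ℝ * rescale (-1) (PowerSeries.exp ℝ) = 1 :=
    PowerSeries.exp_mul_exp_neg_eq_one
  rw [h2, pscomp_one]

end PScompAux

open PScompAux

/-- For pseudo-involutory f and g with g(0)=1 : g·(g∘(-f)) = 1 iff
g = exp(φ(√(zf))) for some odd power series φ. -/
theorem stmt_10 (f s g : PowerSeries ℝ)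
    (hf0 : constantCoeff f = 0) (hf1 : coeff 1 f = 1)
    (hpi : pscomp f (-f) = -X) (hne : f ≠ -X)
    -- s = √(zf)
    (hsq : s ^ 2 = X * f) (hs0 : constantCoeff s = 0) (hs1 : coeff 1 s = 1)
    (hg0 : constantCoeff g = 1) :
    g * pscomp g (-f) = 1 ↔
      ∃ φ : PowerSeries ℝ, constantCoeff φ = 0 ∧ pscomp φ (-X) = -φ ∧
        g = pscomp (PowerSeries.exp ℝ) (pscomp φ s) := by
  have hfneg0 : constantCoeff (-f) = 0 := by simp [hf0]
  have hnegX0 : constantCoeff (-X : PowerSeries ℝ) = 0 := by simp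
  -- s ∘ (-f) = -s
  have hsf : pscomp s (-f) = -s := by
    have h2 : (pscomp s (-f)) ^ 2 = s ^ 2 := by
      rw [← pscomp_pow hfneg0, hsq, pscomp_mul hfneg0, pscomp_X hfneg0, hpi]
      ring
    have h3 : (pscomp s (-f) - s) * (pscomp s (-f) + s) = 0 := by linear_combination h2
    rcases mul_eq_zero.mp h3 with h4 | h4
    · exfalso
      have h5 : pscomp s (-f) = s := sub_eq_zero.mp h4
      have h6 : coeff 1 (pscomp s (-f)) = -1 := by
        rw [coeff_pscomp]
        rw [show Finset.range 2 = {0, 1} from rfl]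
        rw [Finset.sum_insert (by simp), Finset.sum_singleton]
        rw [← coeff_zero_eq_constantCoeff_apply] at hs0
        simp [hs0, hs1, hf1]
      rw [h5, hs1] at h6
      norm_num at h6
    · exact eq_neg_of_add_eq_zero_left h4
  constructor
  · intro h
    -- L = log g
    obtain ⟨L, hL0, hLg⟩ := pscomp_surjective exp_coeff_one
      (t := g) (by rw [hg0, exp_const])
    -- sb = compositional inverse of s
    obtain ⟨sb, hsb0, hsbs⟩ := pscomp_surjective hs1 (t := X) (by simp [hs0])
    have hsbs2 : pscomp sb s = X := by
      refine pscomp_injective hs1 ?_ (by simp) ?_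
      · rw [constantCoeff_pscomp, hsb0]
      · rw [← pscomp_assoc s hsb0 hs0, hsbs, pscomp_X hs0, pscomp_X_right]
    have hgne : g ≠ 0 := fun h0 => by rw [h0, map_zero] at hg0; norm_num at hg0
    have hM : g * pscomp (PowerSeries.exp ℝ) (pscomp L (-f)) = 1 := by
      rw [← pscomp_assoc (PowerSeries.exp ℝ) hL0 hfneg0, hLg]
      exact h
    have hA : g * pscomp (PowerSeries.exp ℝ) (-L) = 1 := by
      conv_lhs => rw [← hLg]
      exact ExpMul hL0
    have hexps : pscomp (PowerSeries.exp ℝ) (pscomp L (-f)) = pscomp (PowerSeries.exp ℝ) (-L) :=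
      mul_left_cancel₀ hgne (hM.trans hA.symm)
    have hMeq : pscomp L (-f) = -L := by
      refine pscomp_injective exp_coeff_one ?_ (by simp [hL0]) hexps
      rw [constantCoeff_pscomp, hL0]
    refine ⟨pscomp L sb, ?_, ?_, ?_⟩
    · rw [constantCoeff_pscomp, hL0]
    · -- oddness
      have hkey : pscomp sb (-X) = pscomp (-f) sb := by
        refine pscomp_injective hs1 ?_ ?_ ?_
        · rw [constantCoeff_pscomp, hsb0]
        · rw [constantCoeff_pscomp, hfneg0]
        · rw [← pscomp_assoc s hsb0 hnegX0, hsbs, pscomp_X hnegX0,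
            ← pscomp_assoc s hfneg0 hsb0, hsf, pscomp_neg, hsbs]
      rw [pscomp_assoc L hsb0 hnegX0, hkey, ← pscomp_assoc L hfneg0 hsb0, hMeq, pscomp_neg]
    · rw [pscomp_assoc L hsb0 hs0, hsbs2, pscomp_X_right, hLg]
  · rintro ⟨φ, hφ0, hφodd, rfl⟩
    set u := pscomp φ s with hu
    have hu0 : constantCoeff u = 0 := by rw [hu, constantCoeff_pscomp, hφ0]
    have huf : pscomp u (-f) = -u := by
      rw [hu, pscomp_assoc φ hs0 hfneg0, hsf,
        show -s = pscomp (-X) s by rw [pscomp_neg, pscomp_X hs0],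
        ← pscomp_assoc φ hnegX0 hs0, hφodd, pscomp_neg]
    rw [show pscomp (pscomp (PowerSeries.exp ℝ) u) (-f)
        = pscomp (PowerSeries.exp ℝ) (pscomp u (-f)) from
      pscomp_assoc (PowerSeries.exp ℝ) hu0 hfneg0, huf]
    exact ExpMul hu0
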